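/- arXiv:2402.01543 — 2 statements merged into one kernel-verified Lean document; each statement's English description precedes it below -/
import Mathlib

section
/- Let f*(X, M) = Σ_{m ∈ {0,1}^d} (Σ_{j=1}^d w*_{j,m} (1 - M_j) X_j) · 1(M = m), assume |f*(x, m)| ≤ L for all x in the support and all m ∈ {0,1}^d, and fix X. Viewing f*(X, ·) as a polynomial function of M ∈ ℝ^d (via the multilinear extension of the indicators), every mixed partial derivative of order t with respect to distinct coordinates of M is bounded in absolute value by 2^t L at every binary point evaluation context: specifically |∂^t f*/∂M_{j_1}⋯∂M_{j_t}| ≤ 2^t L, since the sum defining the derivative has at most 2^t nonzero terms each bounded by L. -/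
/-!
Each factor `1 - x - b + 2xb` of the multilinear extension is affine in its coordinate with slope
`2b - 1 = ±1`, so differentiating in distinct coordinates `j₁, …, jₜ` replaces those factors by
`±1` and leaves the others untouched. At a binary point `M` the remaining factors are the
indicators of `mᵢ = Mᵢ` for `i ∉ {j₁, …, jₜ}`, so only the `2^t` patterns `m` that agree with `M`
off the `jₖ` survive, each contributing a coefficient of absolute value at most `L`.
-/

noncomputable section

/-- Real value of a Boolean coordinate. -/
def bval (b : Bool) : ℝ := if b then 1 else 0

/-- Partial derivative of `f : ℝ^d → ℝ` with respect to coordinate `j`. -/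
def pderiv' {d : ℕ} (j : Fin d) (f : (Fin d → ℝ) → ℝ) : (Fin d → ℝ) → ℝ :=
  fun x => fderiv ℝ f x (Pi.single j 1)

/-- Mixed partial derivative of `f` with respect to the list of coordinates `L`. -/
def mixedPartial {d : ℕ} (L : List (Fin d)) (f : (Fin d → ℝ) → ℝ) : (Fin d → ℝ) → ℝ :=
  L.foldr pderiv' f

/-- The multilinear extension of `x ↦ 1(x = b)` from `{0, 1}` to `ℝ`. -/
def indicatorFactor (b : Bool) (x : ℝ) : ℝ := 1 - x - bval b + 2 * x * bval b

lemma indicatorFactor_bval (b b' : Bool) :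
    indicatorFactor b (bval b') = if b = b' then 1 else 0 := by
  cases b <;> cases b' <;> norm_num [indicatorFactor, bval]

lemma abs_two_mul_bval_sub_one (b : Bool) : |2 * bval b - 1| = 1 := by
  cases b <;> norm_num [bval]

section Derivatives

variable {d : ℕ}

lemma hasFDerivAt_indicatorFactor (b : Bool) (i : Fin d) (M : Fin d → ℝ) :
    HasFDerivAt (fun M : Fin d → ℝ => indicatorFactor b (M i))
      ((2 * bval b - 1) • ContinuousLinearMap.proj (R := ℝ) (φ := fun _ : Fin d => ℝ) i) M := by
  have h := (((ContinuousLinearMap.proj (R := ℝ) (φ := fun _ : Fin d => ℝ) i).hasFDerivAt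
    (x := M)).const_mul (2 * bval b - 1)).add_const (1 - bval b)
  refine h.congr_of_eventuallyEq (Filter.Eventually.of_forall fun M => ?_)
  simp only [indicatorFactor, ContinuousLinearMap.proj_apply]
  ring

lemma pderiv'_sum_mul_prod_indicatorFactor (S : Finset (Fin d)) (c : (Fin d → Bool) → ℝ)
    {j : Fin d} (hj : j ∈ S) :
    pderiv' j (fun M => ∑ m : Fin d → Bool, c m * ∏ i ∈ S, indicatorFactor (m i) (M i))
      = fun M => ∑ m : Fin d → Bool,
          (c m * (2 * bval (m j) - 1)) * ∏ i ∈ S.erase j, indicatorFactor (m i) (M i) := by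
  funext M
  have hF := HasFDerivAt.fun_sum (u := Finset.univ) fun m _ =>
    (HasFDerivAt.finsetProd (u := S) fun i _ =>
      hasFDerivAt_indicatorFactor (m i) i M).const_mul (c m)
  rw [pderiv', hF.fderiv, sum_apply]
  refine Finset.sum_congr rfl fun m _ => ?_
  rw [smul_apply, sum_apply,
    Finset.sum_eq_single_of_mem j hj fun i _ hij => by simp [Pi.single_eq_of_ne hij]]
  simp only [smul_apply, ContinuousLinearMap.proj_apply, Pi.single_eq_same, smul_eq_mul]
  ring

lemma mixedPartial_sum_mul_prod_indicatorFactor {ℓ : List (Fin d)} (hℓ : ℓ.Nodup)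
    {S : Finset (Fin d)} (hℓS : ∀ a ∈ ℓ, a ∈ S) (c : (Fin d → Bool) → ℝ) :
    mixedPartial ℓ (fun M => ∑ m : Fin d → Bool, c m * ∏ i ∈ S, indicatorFactor (m i) (M i))
      = fun M => ∑ m : Fin d → Bool,
          (c m * ∏ a ∈ ℓ.toFinset, (2 * bval (m a) - 1)) *
            ∏ i ∈ S \ ℓ.toFinset, indicatorFactor (m i) (M i) := by
  induction ℓ generalizing c with
  | nil => simp [mixedPartial]
  | cons a ℓ ih =>
    obtain ⟨haℓ, hℓ⟩ := List.nodup_cons.mp hℓ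
    have haS : a ∈ S \ ℓ.toFinset :=
      Finset.mem_sdiff.mpr ⟨hℓS a List.mem_cons_self, by simpa using haℓ⟩
    change pderiv' a (mixedPartial ℓ _) = _
    rw [ih hℓ (fun b hb => hℓS b (List.mem_cons_of_mem a hb)),
      pderiv'_sum_mul_prod_indicatorFactor _ _ haS]
    have hsdiff : S \ (a :: ℓ).toFinset = (S \ ℓ.toFinset).erase a := by
      ext x
      simp only [List.toFinset_cons, Finset.mem_sdiff, Finset.mem_insert, Finset.mem_erase]
      tauto
    funext M
    refine Finset.sum_congr rfl fun m _ => ?_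
    rw [hsdiff, List.toFinset_cons, Finset.prod_insert (by simpa using haℓ)]
    ring

end Derivatives

lemma sum_prod_compl_ite_eq {ι β : Type*} [Fintype ι] [DecidableEq ι] [Fintype β]
    [DecidableEq β] (s : Finset ι) (M : ι → β) :
    ∑ m : ι → β, ∏ i ∈ sᶜ, (if m i = M i then (1 : ℝ) else 0) = Fintype.card β ^ s.card := by
  have hfactor (m : ι → β) : ∏ i ∈ sᶜ, (if m i = M i then (1 : ℝ) else 0)
      = ∏ i, if i ∈ s then 1 else if m i = M i then 1 else 0 := by
    rw [← Finset.univ_inter sᶜ, ← Finset.prod_ite_mem]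
    simp only [Finset.mem_compl, ite_not]
  simp_rw [hfactor]
  rw [← Fintype.prod_sum (fun i b => if i ∈ s then (1 : ℝ) else if b = M i then 1 else 0)]
  simp

lemma abs_sum_mul_prod_indicatorFactor_bval_le {ι : Type*} [Fintype ι] [DecidableEq ι]
    {L : ℝ} {c : (ι → Bool) → ℝ} (hc : ∀ m, |c m| ≤ L) (T : Finset ι) (M : ι → Bool) :
    |∑ m : ι → Bool, (c m * ∏ a ∈ T, (2 * bval (m a) - 1)) *
        ∏ i ∈ Tᶜ, indicatorFactor (m i) (bval (M i))| ≤ 2 ^ T.card * L := by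
  have hterm (m : ι → Bool) :
      |(c m * ∏ a ∈ T, (2 * bval (m a) - 1)) * ∏ i ∈ Tᶜ, indicatorFactor (m i) (bval (M i))|
        ≤ L * ∏ i ∈ Tᶜ, (if m i = M i then (1 : ℝ) else 0) := by
    have hnonneg : (0 : ℝ) ≤ ∏ i ∈ Tᶜ, (if m i = M i then (1 : ℝ) else 0) :=
      Finset.prod_nonneg fun i _ => by positivity
    simp only [indicatorFactor_bval, abs_mul, Finset.abs_prod, abs_two_mul_bval_sub_one,
      Finset.prod_const_one, mul_one, abs_of_nonneg hnonneg]
    exact mul_le_mul_of_nonneg_right (hc m) hnonneg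
  calc _ ≤ ∑ m : ι → Bool, L * ∏ i ∈ Tᶜ, (if m i = M i then (1 : ℝ) else 0) :=
        (Finset.abs_sum_le_sum_abs _ _).trans (Finset.sum_le_sum fun m _ => hterm m)
    _ = 2 ^ T.card * L := by
        rw [← Finset.mul_sum, sum_prod_compl_ite_eq, Fintype.card_bool, mul_comm]
        norm_num

theorem mixedPartial_bound_general (d t : ℕ) (L : ℝ)
    (w : Fin d → (Fin d → Bool) → ℝ) (Xt : Fin d → ℝ)
    (hbound : ∀ m : Fin d → Bool, |∑ j : Fin d, w j m * Xt j| ≤ L)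
    (f : (Fin d → ℝ) → ℝ)
    (hf : f = fun M => ∑ m : Fin d → Bool,
      (∑ j : Fin d, w j m * Xt j) *
        ∏ i : Fin d, (1 - M i - bval (m i) + 2 * M i * bval (m i)))
    (j : Fin t → Fin d) (hj : Function.Injective j)
    (M : Fin d → Bool) :
    |mixedPartial (List.ofFn j) f (fun i => bval (M i))| ≤ 2 ^ t * L := by
  have hnodup : (List.ofFn j).Nodup := List.nodup_ofFn.mpr hj
  have hcard : (List.ofFn j).toFinset.card = t := by
    rw [List.toFinset_card_of_nodup hnodup, List.length_ofFn]
  have hf' : f = fun M => ∑ m : Fin d → Bool,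
      (∑ j : Fin d, w j m * Xt j) * ∏ i ∈ Finset.univ, indicatorFactor (m i) (M i) := hf
  have hbound' := abs_sum_mul_prod_indicatorFactor_bval_le hbound (List.ofFn j).toFinset M
  rw [hcard, Finset.compl_eq_univ_sdiff] at hbound'
  rwa [hf', mixedPartial_sum_mul_prod_indicatorFactor hnodup fun _ _ => Finset.mem_univ _]

/-- If `f*(X̃, M) = ∑_m (∑_j w_{j,m} X̃_j) · 1(M = m)` (with the indicators extended
multilinearly) and `|∑_j w_{j,m} X̃_j| ≤ L` for every `m`, then every mixed partial
derivative of order `t` with respect to distinct coordinates of `M` is bounded by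
`2^t L` at every binary point. -/
theorem mixedPartial_bound (d t : ℕ) (hd : 0 < d) (ht : t ≤ d) (L : ℝ) (hL : 0 < L)
    (w : Fin d → (Fin d → Bool) → ℝ) (Xt : Fin d → ℝ)
    (hbound : ∀ m : Fin d → Bool, |∑ j : Fin d, w j m * Xt j| ≤ L)
    (f : (Fin d → ℝ) → ℝ)
    (hf : f = fun M => ∑ m : Fin d → Bool,
      (∑ j : Fin d, w j m * Xt j) *
        ∏ i : Fin d, (1 - M i - bval (m i) + 2 * M i * bval (m i)))
    (j : Fin t → Fin d) (hj : Function.Injective j)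
    (M : Fin d → Bool) :
    |mixedPartial (List.ofFn j) f (fun i => bval (M i))| ≤ 2 ^ t * L :=
  mixedPartial_bound_general d t L w Xt hbound f hf j hj M

end
end

section
/- Suppose Y = w*_1 X_1 + ε with E[ε | X_1, M_1] = 0, and define μ_1 = E[Y | M_1 = 1] · E[X_1² | M_1 = 0] / E[Y X_1 | M_1 = 0] with w_1 = E[Y X_1 | M_1 = 0] / E[X_1² | M_1 = 0]. If w*_1 ≠ 0 and E[X_1² | M_1 = 0] > 0, then w_1 = w*_1 and μ_1 = E[X_1 | M_1 = 1]. -/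
/-!
Conditional centring of `ε` given `(X, M)` makes `ε` orthogonal to every `σ(X, M)`-measurable
weight on every event `{M = a}`. With weight `X` on `{M = 0}` and weight `1` on `{M = 1}` this gives
`E[Y X | M = 0] = w* E[X² | M = 0]` and `E[Y | M = 1] = w* E[X | M = 1]`; both identities then
follow by cancelling `E[X² | M = 0]` and `w*`.
-/

open MeasureTheory ProbabilityTheory

section CondExpZero

variable {Ω : Type*} {m mΩ : MeasurableSpace Ω} {μ : Measure Ω} {ε g : Ω → ℝ}

lemma integral_mul_eq_zero_of_condExp_eq_zero (hm : m ≤ mΩ) [SigmaFinite (μ.trim hm)]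
    (hg : StronglyMeasurable[m] g) (hεg : Integrable (ε * g) μ) (hε : Integrable ε μ)
    (hcond : μ[ε|m] =ᵐ[μ] 0) : ∫ ω, ε ω * g ω ∂μ = 0 := by
  have hpull : μ[ε * g|m] =ᵐ[μ] 0 := by
    filter_upwards [condExp_mul_of_stronglyMeasurable_right hg hεg hε, hcond] with ω hω hω'
    simp [hω, hω']
  calc ∫ ω, ε ω * g ω ∂μ = ∫ ω, μ[ε * g|m] ω ∂μ := (integral_condExp hm).symm
    _ = 0 := by simp [integral_congr_ae hpull]

lemma integral_cond_eq_setIntegral (s : Set Ω) (f : Ω → ℝ) :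
    ∫ ω, f ω ∂μ[|s] = (μ s)⁻¹.toReal * ∫ ω in s, f ω ∂μ := by
  rw [ProbabilityTheory.cond, integral_smul_measure, smul_eq_mul]

lemma MeasureTheory.Integrable.cond {f : Ω → ℝ} (hf : Integrable f μ) (s : Set Ω) :
    Integrable f μ[|s] := by
  by_cases hs : μ s = 0
  · simp [cond_eq_zero_of_meas_eq_zero hs]
  · exact hf.restrict.smul_measure (ENNReal.inv_ne_top.mpr hs)

lemma integral_cond_mul_eq_zero_of_condExp_eq_zero (hm : m ≤ mΩ) [SigmaFinite (μ.trim hm)]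
    {s : Set Ω} (hs : MeasurableSet[m] s) (hg : StronglyMeasurable[m] g)
    (hεg : Integrable (ε * g) μ) (hε : Integrable ε μ) (hcond : μ[ε|m] =ᵐ[μ] 0) :
    ∫ ω, ε ω * g ω ∂μ[|s] = 0 := by
  have hind : s.indicator (fun ω => ε ω * g ω) = fun ω => ε ω * s.indicator g ω :=
    funext fun _ => Set.indicator_mul_right s ε g
  have hεg_ind : Integrable (ε * s.indicator g) μ :=
    (hεg.indicator (hm s hs)).congr (.of_forall fun _ => Set.indicator_mul_right s ε g)
  rw [integral_cond_eq_setIntegral, ← integral_indicator (hm s hs), hind,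
    integral_mul_eq_zero_of_condExp_eq_zero hm (hg.indicator hs) hεg_ind hε hcond, mul_zero]

lemma integral_cond_eq_zero_of_condExp_eq_zero (hm : m ≤ mΩ) [SigmaFinite (μ.trim hm)]
    {s : Set Ω} (hs : MeasurableSet[m] s) (hε : Integrable ε μ) (hcond : μ[ε|m] =ᵐ[μ] 0) :
    ∫ ω, ε ω ∂μ[|s] = 0 := by
  simpa using integral_cond_mul_eq_zero_of_condExp_eq_zero (g := fun _ => 1) hm hs
    stronglyMeasurable_const (by simpa [Pi.mul_def] using hε) hε hcond

end CondExpZero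

theorem joint_impute_recovers_conditional_mean_general
    {Ω : Type*} [MeasurableSpace Ω] (μ : Measure Ω) [IsProbabilityMeasure μ]
    (X M ε : Ω → ℝ) (hX : Measurable X) (hM : Measurable M)
    (wstar : ℝ) (hwstar : wstar ≠ 0)
    (Y : Ω → ℝ) (hY : Y = fun ω => wstar * X ω + ε ω)
    (hεcond : μ[ε | MeasurableSpace.comap (fun ω => (X ω, M ω)) inferInstance] =ᵐ[μ] 0)
    (hXint : Integrable X μ) (hεint : Integrable ε μ)
    (hX2int : Integrable (fun ω => X ω ^ 2) μ)
    (hεXint : Integrable (fun ω => ε ω * X ω) μ)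
    (hX2pos : 0 < ∫ ω, X ω ^ 2 ∂(μ[|{ω | M ω = 0}])) :
    (∫ ω, Y ω * X ω ∂(μ[|{ω | M ω = 0}])) / (∫ ω, X ω ^ 2 ∂(μ[|{ω | M ω = 0}]))
      = wstar ∧
    (∫ ω, Y ω ∂(μ[|{ω | M ω = 1}])) * (∫ ω, X ω ^ 2 ∂(μ[|{ω | M ω = 0}])) /
        (∫ ω, Y ω * X ω ∂(μ[|{ω | M ω = 0}]))
      = ∫ ω, X ω ∂(μ[|{ω | M ω = 1}]) := by
  have hm := (hX.prodMk hM).comap_le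
  set m := MeasurableSpace.comap (fun ω => (X ω, M ω)) inferInstance
  have hpair : Measurable[m] (fun ω => (X ω, M ω)) := comap_measurable _
  have hlevel (a : ℝ) : MeasurableSet[m] {ω | M ω = a} :=
    (measurable_snd.comp hpair) (measurableSet_singleton a)
  have hεX : ∫ ω, ε ω * X ω ∂μ[|{ω | M ω = 0}] = 0 :=
    integral_cond_mul_eq_zero_of_condExp_eq_zero hm (hlevel 0)
      (measurable_fst.comp hpair).stronglyMeasurable hεXint hεint hεcond
  have hε : ∫ ω, ε ω ∂μ[|{ω | M ω = 1}] = 0 :=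
    integral_cond_eq_zero_of_condExp_eq_zero hm (hlevel 1) hεint hεcond
  have hYX0 :
      ∫ ω, Y ω * X ω ∂μ[|{ω | M ω = 0}] = wstar * ∫ ω, X ω ^ 2 ∂μ[|{ω | M ω = 0}] := by
    simp_rw [hY, add_mul, mul_assoc, ← sq]
    rw [integral_add ((hX2int.const_mul wstar).cond _) (hεXint.cond _), integral_const_mul, hεX,
      add_zero]
  have hY1 :
      ∫ ω, Y ω ∂μ[|{ω | M ω = 1}] = wstar * ∫ ω, X ω ∂μ[|{ω | M ω = 1}] := by
    rw [hY, integral_add ((hXint.const_mul wstar).cond _) (hεint.cond _), integral_const_mul, hε,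
      add_zero]
  refine ⟨by rw [hYX0, mul_div_cancel_right₀ _ hX2pos.ne'], ?_⟩
  rw [hYX0, hY1]
  field_simp

/-- If `Y = w*₁ X₁ + ε` with `E[ε | X₁, M₁] = 0`, then the population least-squares
slope on observed data `w₁ = E[Y X₁ | M₁=0] / E[X₁² | M₁=0]` recovers `w*₁`, and the
joint-optimal imputation constant
`μ₁ = E[Y | M₁=1] · E[X₁² | M₁=0] / E[Y X₁ | M₁=0]` equals `E[X₁ | M₁=1]`. -/
theorem joint_impute_recovers_conditional_mean
    {Ω : Type*} [MeasurableSpace Ω] (μ : Measure Ω) [IsProbabilityMeasure μ]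
    (X M ε : Ω → ℝ) (hX : Measurable X) (hM : Measurable M) (hε : Measurable ε)
    (hMbin : ∀ ω, M ω = 0 ∨ M ω = 1)
    (wstar : ℝ) (hwstar : wstar ≠ 0)
    (Y : Ω → ℝ) (hY : Y = fun ω => wstar * X ω + ε ω)
    (h0 : 0 < μ {ω | M ω = 0}) (h1 : 0 < μ {ω | M ω = 1})
    (hεcond : μ[ε | MeasurableSpace.comap (fun ω => (X ω, M ω)) inferInstance] =ᵐ[μ] 0)
    (hXint : Integrable X μ) (hεint : Integrable ε μ)
    (hX2int : Integrable (fun ω => X ω ^ 2) μ)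
    (hYXint : Integrable (fun ω => Y ω * X ω) μ)
    (hεXint : Integrable (fun ω => ε ω * X ω) μ)
    (hX2pos : 0 < ∫ ω, X ω ^ 2 ∂(μ[|{ω | M ω = 0}])) :
    (∫ ω, Y ω * X ω ∂(μ[|{ω | M ω = 0}])) / (∫ ω, X ω ^ 2 ∂(μ[|{ω | M ω = 0}]))
      = wstar ∧
    (∫ ω, Y ω ∂(μ[|{ω | M ω = 1}])) * (∫ ω, X ω ^ 2 ∂(μ[|{ω | M ω = 0}])) /
        (∫ ω, Y ω * X ω ∂(μ[|{ω | M ω = 0}]))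
      = ∫ ω, X ω ∂(μ[|{ω | M ω = 1}]) :=
  joint_impute_recovers_conditional_mean_general μ X M ε hX hM wstar hwstar Y hY hεcond hXint hεint
    hX2int hεXint hX2pos
end
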